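/- arXiv:2402.04463 — 5 statements merged into one kernel-verified Lean document; each statement's English description precedes it below -/
import Mathlib

section
/- Let U be a nonempty finite type (of feasible tours), V a finite type (of customers), z : U → Finset V a map assigning to each tour its set of visited customers, c : U → ℝ a routing-cost function with c(u) ≥ 0 for all u ∈ U, ū ∈ U a target tour, and M ∈ ℝ with M > c(ū). Define prizes θ : V → ℝ by θ(i) = M if i ∈ z(ū) and θ(i) = −M otherwise. Then every u* ∈ U maximizing the prize-collecting objective u ↦ (∑_{i ∈ z(u)} θ(i)) − c(u) over U satisfies z(u*) = z(ū) and c(u*) ≤ c(ū). -/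
/-!
Against the prizes `θ = ±M`, replacing the target tour `ū` by any `u` changes the total prize
by exactly `-M` per customer in the symmetric difference `z u ∆ z ū`. Optimality of `u*`
therefore gives `M · #(z u* ∆ z ū) ≤ c ū - c u* ≤ c ū < M`, so the symmetric difference is
empty, and then the same inequality reads `c u* ≤ c ū`.
-/

open Finset
open scoped symmDiff

theorem Finset.sum_sub_sum_eq_card_symmDiff_nsmul {V G : Type*} [DecidableEq V] [AddCommGroup G]
    (s t : Finset V) (M : G) :
    ∑ i ∈ t, (if i ∈ t then M else -M) - ∑ i ∈ s, (if i ∈ t then M else -M) =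
      #(s ∆ t) • M := by
  rw [← sum_sdiff_sub_sum_sdiff, Finset.symmDiff_def,
    card_union_of_disjoint disjoint_sdiff_sdiff, add_nsmul,
    sum_ite_of_true fun i hi => (mem_sdiff.1 hi).1,
    sum_ite_of_false fun i hi => (mem_sdiff.1 hi).2, sum_const, sum_const, smul_neg,
    sub_neg_eq_add, add_comm]

theorem stmt_0_general {U V : Type*} [DecidableEq V]
    (z : U → Finset V) (c : U → ℝ) (hc : ∀ u, 0 ≤ c u)
    (ubar : U) (M : ℝ) (hM : c ubar < M)
    (θ : V → ℝ) (hθ : ∀ i, θ i = if i ∈ z ubar then M else -M)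
    (ustar : U)
    (hopt : ∀ u : U, (∑ i ∈ z u, θ i) - c u ≤ (∑ i ∈ z ustar, θ i) - c ustar) :
    z ustar = z ubar ∧ c ustar ≤ c ubar := by
  have hgap : (#(z ustar ∆ z ubar) : ℝ) * M ≤ c ubar - c ustar := by
    have h := sum_sub_sum_eq_card_symmDiff_nsmul (z ustar) (z ubar) M
    simp only [← hθ, nsmul_eq_mul] at h
    linarith [hopt ubar]
  have hz : z ustar = z ubar := by
    by_contra hne
    have hcard : (1 : ℝ) ≤ #(z ustar ∆ z ubar) :=
      Nat.one_le_cast.2 (card_pos.2 (symmDiff_nonempty.2 hne))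
    linarith [le_mul_of_one_le_left ((hc ubar).trans hM.le) hcard, hc ustar]
  refine ⟨hz, ?_⟩
  simp only [hz, symmDiff_self, bot_eq_empty, card_empty, Nat.cast_zero, zero_mul] at hgap
  linarith

/-- Combinatorial core of Proposition 1: with prizes `+M` on the customers visited by the
target tour `ubar` and `-M` elsewhere, where `M > c ubar` and all routing costs are
nonnegative, any maximizer of the prize-collecting objective visits exactly the customers
of `ubar`, at no greater routing cost. -/
theorem stmt_0 {U V : Type*} [Fintype U] [Nonempty U] [Fintype V] [DecidableEq V]
    (z : U → Finset V) (c : U → ℝ) (hc : ∀ u, 0 ≤ c u)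
    (ubar : U) (M : ℝ) (hM : c ubar < M)
    (θ : V → ℝ) (hθ : ∀ i, θ i = if i ∈ z ubar then M else -M)
    (ustar : U)
    (hopt : ∀ u : U, (∑ i ∈ z u, θ i) - c u ≤ (∑ i ∈ z ustar, θ i) - c ustar) :
    z ustar = z ubar ∧ c ustar ≤ c ubar :=
  stmt_0_general z c hc ubar M hM θ hθ ustar hopt
end

section
/- Let U be a nonempty finite type (of feasible tours), V a finite type (of customers), z : U → Finset V a map assigning to each tour its set of visited customers, c : U → ℝ a routing-cost function with c(u) ≥ 0 for all u ∈ U, and Q : U → ℝ a cost function of the form Q(u) = q(z(u)) + c(u) for some q : Finset V → ℝ (i.e., apart from the additively entering routing cost, the cost of a decision depends only on the set of visited customers). Then there exists a prize vector θ : V → ℝ such that every u* ∈ U maximizing the prize-collecting objective u ↦ (∑_{i ∈ z(u)} θ(i)) − c(u) over U is a minimizer of Q over U. -/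
/-!
Let `u₀` minimise `Q` and give every customer of `z u₀` the prize `M` and every other customer
the prize `-M`. Changing the visited set away from `z u₀` costs at least `M` in collected prizes,
so once `M` exceeds the spread of the routing costs, every maximiser of the prize-collecting
objective visits exactly `z u₀`; comparing it with `u₀` then shows that its routing cost, hence
its cost `Q`, is at most that of `u₀`.
-/

open Finset
open scoped symmDiff

section SignedIndicator

variable {V : Type*} [DecidableEq V]

def signedIndicator (B : Finset V) (i : V) : ℝ := if i ∈ B then 1 else -1

lemma sum_signedIndicator (A B : Finset V) :
    ∑ i ∈ A, signedIndicator B i = #(A ∩ B) - #(A \ B) := by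
  simp only [signedIndicator, sum_ite, filter_mem_eq_inter, filter_notMem_eq_sdiff, sum_const,
    nsmul_eq_mul, mul_one, mul_neg, sub_eq_add_neg]

lemma one_le_card_sdiff_add_card_sdiff {A B : Finset V} (h : A ≠ B) :
    1 ≤ #(A \ B) + #(B \ A) := by
  have hne : (A ∆ B).Nonempty := nonempty_iff_ne_empty.2 (symmDiff_eq_empty.not.2 h)
  exact hne.card_pos.trans_le (symmDiff_def A B ▸ card_union_le _ _)

lemma sum_signedIndicator_add_one_le {A B : Finset V} (h : A ≠ B) :
    ∑ i ∈ A, signedIndicator B i + 1 ≤ ∑ i ∈ B, signedIndicator B i := by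
  have hB : #(A ∩ B) + #(B \ A) = #B := by
    rw [inter_comm]
    exact card_inter_add_card_sdiff B A
  have hcard : (1 : ℝ) ≤ #(A \ B) + #(B \ A) := by
    exact_mod_cast one_le_card_sdiff_add_card_sdiff h
  rw [sum_signedIndicator, sum_signedIndicator, inter_self, Finset.sdiff_self, card_empty, ← hB]
  push_cast
  linarith

end SignedIndicator

lemma visits_eq_of_forall_prize_le {U V : Type*} [DecidableEq V] (z : U → Finset V) (c : U → ℝ)
    (u₀ : U) {M : ℝ} (hM : ∀ u, c u₀ - c u < M) {u' : U}
    (hmax : ∀ u, ∑ i ∈ z u, M * signedIndicator (z u₀) i - c u ≤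
      ∑ i ∈ z u', M * signedIndicator (z u₀) i - c u') :
    z u' = z u₀ := by
  by_contra h
  have hgap := mul_le_mul_of_nonneg_left (sum_signedIndicator_add_one_le h)
    (by simpa using (hM u₀).le)
  rw [mul_add, mul_sum, mul_sum] at hgap
  linarith [hmax u₀, hM u']

theorem stmt_1_general {U V : Type*} [Fintype U] [Nonempty U]
    (z : U → Finset V) (c : U → ℝ)
    (Q : U → ℝ) (q : Finset V → ℝ) (hQ : ∀ u, Q u = q (z u) + c u) :
    ∃ θ : V → ℝ, ∀ ustar : U,
      (∀ u : U, (∑ i ∈ z u, θ i) - c u ≤ (∑ i ∈ z ustar, θ i) - c ustar) →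
      ∀ u : U, Q ustar ≤ Q u := by
  classical
  obtain ⟨u₀, -, hu₀⟩ := exists_min_image univ Q univ_nonempty
  obtain ⟨v, -, hv⟩ := exists_min_image univ c univ_nonempty
  refine ⟨fun i => (c u₀ - c v + 1) * signedIndicator (z u₀) i, fun u' hmax u => ?_⟩
  have hz : z u' = z u₀ :=
    visits_eq_of_forall_prize_le z c u₀ (fun u => by linarith [hv u (mem_univ u)]) hmax
  have hc : c u' ≤ c u₀ := by linarith [hz ▸ hmax u₀]
  calc Q u' = q (z u₀) + c u' := by rw [hQ, hz]
    _ ≤ Q u₀ := by rw [hQ]; linarith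
    _ ≤ Q u := hu₀ u (mem_univ u)

/-- Abstract form of Proposition 1: if the cost `Q` of a decision depends on the decision
only through the set of visited customers, apart from an additively entering nonnegative
routing cost, then there exists a prize vector `θ` such that every maximizer of the
prize-collecting objective is a minimizer of `Q`. -/
theorem stmt_1 {U V : Type*} [Fintype U] [Nonempty U] [Fintype V]
    (z : U → Finset V) (c : U → ℝ) (hc : ∀ u, 0 ≤ c u)
    (Q : U → ℝ) (q : Finset V → ℝ) (hQ : ∀ u, Q u = q (z u) + c u) :
    ∃ θ : V → ℝ, ∀ ustar : U,
      (∀ u : U, (∑ i ∈ z u, θ i) - c u ≤ (∑ i ∈ z ustar, θ i) - c ustar) →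
      ∀ u : U, Q ustar ≤ Q u :=
  stmt_1_general z c Q q hQ
end

section
/- Let U be a nonempty finite type, n a natural number, g : U → ℝⁿ and h : U → ℝ, and let γ denote the standard Gaussian measure on ℝⁿ (the n-fold product of the standard Gaussian measure on ℝ). Define F : ℝⁿ → ℝ by F(θ) = ∫ max_{u ∈ U} (⟨θ + z, g(u)⟩ + h(u)) dγ(z), and for ū ∈ U the Fenchel-Young loss L(θ, ū) = F(θ) − ⟨θ, g(ū)⟩ − h(ū). If there exists u ∈ U with g(u) ≠ g(ū), then L(θ, ū) > 0 for every θ ∈ ℝⁿ. -/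
/-!
With the scores `A u z = ⟨θ + z, g u⟩ + h u`, the loss is `𝔼[max_u A u z - A ū z]` because the
Gaussian perturbation is centred. The integrand is nonnegative and strictly positive on the
half-space `{z | A ū z < A u z}`, which is open, and nonempty as soon as `g u ≠ g ū`; since the
Gaussian measure charges every nonempty open set, the expectation is positive.
-/

open MeasureTheory ProbabilityTheory

open Matrix Finset

section Gaussian

variable {ι : Type*} [Fintype ι]

lemma isOpenPosMeasure_gaussianReal (m : ℝ) {v : NNReal} (hv : v ≠ 0) :
    (gaussianReal m v).IsOpenPosMeasure :=
  ⟨fun _ hs hne h0 => hs.measure_ne_zero volume hne (gaussianReal_absolutelyContinuous' m hv h0)⟩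

lemma integrable_eval_pi_gaussianReal (m : ℝ) (v : NNReal) (i : ι) :
    Integrable (fun z : ι → ℝ => z i) (Measure.pi fun _ => gaussianReal m v) :=
  (measurePreserving_eval _ i).integrable_comp_of_integrable (g := id)
    ((memLp_id_gaussianReal 1).integrable le_rfl)

lemma integral_eval_pi_gaussianReal (m : ℝ) (v : NNReal) (i : ι) :
    ∫ z : ι → ℝ, z i ∂(Measure.pi fun _ => gaussianReal m v) = m := by
  refine (integral_map (μ := Measure.pi fun _ : ι => gaussianReal m v)
    (measurable_pi_apply i).aemeasurable aestronglyMeasurable_id).symm.trans ?_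
  rw [(measurePreserving_eval _ i).map_eq]
  exact integral_id_gaussianReal

end Gaussian

lemma Integrable.finset_sup' {α U : Type*} [MeasurableSpace α] {μ : Measure α} {s : Finset U}
    (hs : s.Nonempty) {f : U → α → ℝ} (hf : ∀ u ∈ s, Integrable (f u) μ) :
    Integrable (fun z => s.sup' hs fun u => f u z) μ := by
  simp_rw [← Finset.sup'_apply]
  exact sup'_induction hs f (p := (Integrable · μ)) (fun _ hf _ hg => hf.sup hg) hf

lemma integral_lt_integral_finset_sup' {α U : Type*} [MeasurableSpace α] {μ : Measure α}
    {s : Finset U} (hs : s.Nonempty) {f : U → α → ℝ} (hf : ∀ u ∈ s, Integrable (f u) μ)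
    {u v : U} (hu : u ∈ s) (hv : v ∈ s) (hlt : 0 < μ {z | f v z < f u z}) :
    ∫ z, f v z ∂μ < ∫ z, s.sup' hs (fun w => f w z) ∂μ := by
  have hsup := Integrable.finset_sup' hs hf
  rw [← sub_pos, ← integral_sub hsup (hf v hv), integral_pos_iff_support_of_nonneg_ae
    (ae_of_all _ fun z => sub_nonneg.2 (le_sup' (fun w => f w z) hv)) (hsup.sub (hf v hv))]
  refine hlt.trans_le (measure_mono fun z hz => ?_)
  exact (sub_pos.2 (hz.trans_le (le_sup' (fun w => f w z) hu))).ne'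

section Affine

variable {ι : Type*} [Fintype ι]

lemma exists_dotProduct_add_lt {a b : ι → ℝ} (hab : a ≠ b) (c d : ℝ) :
    ∃ x : ι → ℝ, x ⬝ᵥ b + c < x ⬝ᵥ a + d := by
  have hpos : 0 < (a - b) ⬝ᵥ (a - b) :=
    (sum_nonneg fun i _ => mul_self_nonneg _).lt_of_ne'
      (dotProduct_self_eq_zero.not.2 (sub_ne_zero.2 hab))
  refine ⟨((c - d + 1) / ((a - b) ⬝ᵥ (a - b))) • (a - b), ?_⟩
  have key : ((c - d + 1) / ((a - b) ⬝ᵥ (a - b))) • (a - b) ⬝ᵥ (a - b) = c - d + 1 := by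
    rw [smul_dotProduct, smul_eq_mul, div_mul_cancel₀ _ hpos.ne']
  rw [dotProduct_sub] at key
  linarith

variable {μ : Measure (ι → ℝ)}

lemma measure_setOf_dotProduct_add_lt_pos [μ.IsOpenPosMeasure] {a b : ι → ℝ} (hab : a ≠ b)
    (θ : ι → ℝ) (c d : ℝ) : 0 < μ {z | (θ + z) ⬝ᵥ b + c < (θ + z) ⬝ᵥ a + d} := by
  obtain ⟨x, hx⟩ := exists_dotProduct_add_lt hab c d
  refine IsOpen.measure_pos μ (isOpen_lt (by fun_prop) (by fun_prop)) ⟨x - θ, ?_⟩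
  simpa using hx

lemma integrable_add_dotProduct [IsFiniteMeasure μ]
    (hint : ∀ i, Integrable (fun z : ι → ℝ => z i) μ) (θ a : ι → ℝ) :
    Integrable (fun z => (θ + z) ⬝ᵥ a) μ :=
  integrable_finsetSum _ fun i _ => ((integrable_const (θ i)).add (hint i)).mul_const (a i)

lemma integral_add_dotProduct [IsProbabilityMeasure μ]
    (hint : ∀ i, Integrable (fun z : ι → ℝ => z i) μ) (hmean : ∀ i, ∫ z, z i ∂μ = 0)
    (θ a : ι → ℝ) : ∫ z, (θ + z) ⬝ᵥ a ∂μ = θ ⬝ᵥ a := by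
  refine (integral_finsetSum _ fun i _ =>
    ((integrable_const (θ i)).add (hint i)).mul_const (a i)).trans (sum_congr rfl fun i _ => ?_)
  change ∫ z, (θ i + z i) * a i ∂μ = _
  rw [integral_mul_const, integral_add (integrable_const _) (hint i), hmean i]
  simp

noncomputable def perturbedMax {U : Type*} [Fintype U] [Nonempty U] (μ : Measure (ι → ℝ))
    (g : U → ι → ℝ) (h : U → ℝ) (θ : ι → ℝ) : ℝ :=
  ∫ z, univ.sup' univ_nonempty (fun u => (θ + z) ⬝ᵥ g u + h u) ∂μ

theorem dotProduct_add_lt_perturbedMax {U : Type*} [Fintype U] [Nonempty U]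
    [IsProbabilityMeasure μ] [μ.IsOpenPosMeasure]
    (hint : ∀ i, Integrable (fun z : ι → ℝ => z i) μ) (hmean : ∀ i, ∫ z, z i ∂μ = 0)
    (g : U → ι → ℝ) (h : U → ℝ) {u ubar : U} (hu : g u ≠ g ubar) (θ : ι → ℝ) :
    θ ⬝ᵥ g ubar + h ubar < perturbedMax μ g h θ := by
  have hscore (v : U) : Integrable (fun z => (θ + z) ⬝ᵥ g v + h v) μ :=
    (integrable_add_dotProduct hint θ (g v)).add (integrable_const _)
  calc θ ⬝ᵥ g ubar + h ubar = ∫ z, (θ + z) ⬝ᵥ g ubar + h ubar ∂μ := by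
        rw [integral_add (integrable_add_dotProduct hint θ _) (integrable_const _),
          integral_add_dotProduct hint hmean, integral_const, probReal_univ, one_smul]
    _ < perturbedMax μ g h θ :=
        integral_lt_integral_finset_sup' univ_nonempty (fun v _ => hscore v) (mem_univ u)
          (mem_univ ubar) (measure_setOf_dotProduct_add_lt_pos hu θ _ _)

end Affine

/-- Strict positivity of the perturbation-based Fenchel-Young loss: whenever some decision
`u` has a feature vector `g u` different from `g ubar`, the loss
`L(θ, ū) = F(θ) − ⟨θ, g(ū)⟩ − h(ū)` is strictly positive for every `θ`, where
`F(θ) = ∫ max_{u ∈ U} (⟨θ + z, g(u)⟩ + h(u)) dγ(z)` and `γ` is the standard Gaussian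
measure on `ℝⁿ`. -/
theorem stmt_6 {U : Type*} [Fintype U] [Nonempty U] (n : ℕ)
    (g : U → (Fin n → ℝ)) (h : U → ℝ)
    (F : (Fin n → ℝ) → ℝ)
    (hF : ∀ θ : Fin n → ℝ,
      F θ = ∫ z : Fin n → ℝ,
        (Finset.univ.sup' Finset.univ_nonempty
          fun u : U => (∑ i, (θ i + z i) * g u i) + h u)
        ∂(Measure.pi fun _ : Fin n => gaussianReal 0 1))
    (L : (Fin n → ℝ) → U → ℝ)
    (hL : ∀ (θ : Fin n → ℝ) (ubar : U),
      L θ ubar = F θ - (∑ i, θ i * g ubar i) - h ubar)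
    (ubar : U) (hne : ∃ u : U, g u ≠ g ubar) :
    ∀ θ : Fin n → ℝ, 0 < L θ ubar := by
  intro θ
  obtain ⟨u, hu⟩ := hne
  have := isOpenPosMeasure_gaussianReal 0 one_ne_zero
  rw [hL, hF, sub_sub, sub_pos]
  exact dotProduct_add_lt_perturbedMax (integrable_eval_pi_gaussianReal 0 1)
    (integral_eval_pi_gaussianReal 0 1) g h hu θ
end

section
/- Let U be a nonempty finite type, n a natural number, g : U → ℝⁿ and h : U → ℝ such that the map u ↦ (g(u), h(u)) is injective, and let γ denote the standard Gaussian measure on ℝⁿ (the n-fold product of the standard Gaussian measure on ℝ). Then for every θ ∈ ℝⁿ, for γ-almost every z ∈ ℝⁿ, the maximizer of u ↦ ⟨θ + z, g(u)⟩ + h(u) over U is unique, i.e., there exists a unique u* ∈ U with ⟨θ + z, g(u*)⟩ + h(u*) ≥ ⟨θ + z, g(u)⟩ + h(u) for all u ∈ U. -/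
open MeasureTheory ProbabilityTheory

/-- Absolute continuity of finite products of measures on `ℝ`. -/
lemma pi_ac : ∀ (n : ℕ) (μ ν : Fin n → Measure ℝ),
    (∀ i, SigmaFinite (μ i)) → (∀ i, SigmaFinite (ν i)) →
    (∀ i, μ i ≪ ν i) → Measure.pi μ ≪ Measure.pi ν := by
  intro n
  induction n with
  | zero =>
    intro μ ν hμ hν _ s hs
    haveI := hν
    rcases Set.eq_empty_or_nonempty s with rfl | hne
    · simp
    · exfalso
      have hsu : s = Set.univ := by
        obtain ⟨x, hx⟩ := hne
        exact Set.eq_univ_of_forall fun y => by rwa [Subsingleton.elim y x]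
      rw [hsu, Measure.pi_univ] at hs
      simp at hs
  | succ m ih =>
    intro μ ν hμ hν hac
    haveI := hμ; haveI := hν
    set e := MeasurableEquiv.piFinSuccAbove (fun _ : Fin (m + 1) => ℝ) 0 with he
    have h1 := measurePreserving_piFinSuccAbove μ 0
    have h2 := measurePreserving_piFinSuccAbove ν 0
    have hprod : (μ 0).prod (Measure.pi fun j => μ ((0 : Fin (m + 1)).succAbove j))
        ≪ (ν 0).prod (Measure.pi fun j => ν ((0 : Fin (m + 1)).succAbove j)) :=
      (hac 0).prod (ih _ _ (fun j => hμ _) (fun j => hν _) fun j => hac _)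
    refine Measure.AbsolutelyContinuous.mk fun s hs hs0 => ?_
    have hts : MeasurableSet (e.symm ⁻¹' s) := e.symm.measurable hs
    have hpre : e ⁻¹' (e.symm ⁻¹' s) = s := by
      ext z; simp
    have hν0 : ((ν 0).prod (Measure.pi fun j => ν ((0 : Fin (m + 1)).succAbove j)))
        (e.symm ⁻¹' s) = 0 := by
      rw [← h2.map_eq, Measure.map_apply e.measurable hts, hpre]
      exact hs0
    have hμ0 := hprod hν0
    rw [← h1.map_eq, Measure.map_apply e.measurable hts, hpre] at hμ0
    exact hμ0

/-- A hyperplane in `ℝⁿ` has Lebesgue measure zero. -/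
lemma hyperplane_null {n : ℕ} (a : Fin n → ℝ) (ha : a ≠ 0) (c : ℝ) :
    (volume : Measure (Fin n → ℝ)) {z | ∑ i, z i * a i = c} = 0 := by
  obtain ⟨i, hi⟩ := Function.ne_iff.mp ha
  have hi' : a i ≠ 0 := by simpa using hi
  set f : (Fin n → ℝ) →ₗ[ℝ] ℝ := ∑ j, a j • LinearMap.proj j with hf
  have hfapp : ∀ z : Fin n → ℝ, f z = ∑ j, z j * a j := by
    intro z
    simp [hf, LinearMap.sum_apply, mul_comm]
  set x₀ : Fin n → ℝ := Pi.single i (c / a i) with hx₀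
  have hfx₀ : f x₀ = c := by
    rw [hfapp]
    rw [Finset.sum_eq_single i]
    · simp [hx₀, div_mul_cancel₀ _ hi']
    · intro j _ hj; simp [hx₀, Pi.single_apply, hj]
    · intro hni; exact absurd (Finset.mem_univ i) hni
  have hker : LinearMap.ker f ≠ ⊤ := by
    intro htop
    have : f (Pi.single i 1) = 0 := by
      rw [LinearMap.ker_eq_top] at htop
      simp [htop]
    rw [hfapp] at this
    rw [Finset.sum_eq_single i] at this
    · simp at this; exact hi' this
    · intro j _ hj; simp [Pi.single_apply, hj]
    · intro hni; exact absurd (Finset.mem_univ i) hni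
  have hset : {z : Fin n → ℝ | ∑ j, z j * a j = c}
      = (fun z => z + (-x₀)) ⁻¹' (LinearMap.ker f : Set (Fin n → ℝ)) := by
    ext z
    simp only [Set.mem_setOf_eq, Set.mem_preimage, SetLike.mem_coe, LinearMap.mem_ker,
      map_add, map_neg, hfx₀]
    rw [hfapp]
    constructor
    · intro hzc; rw [hzc]; ring
    · intro hz; linarith
  rw [hset, measure_preimage_add_right]
  exact Measure.addHaar_submodule _ _ hker

/-- Almost-sure uniqueness of the optimal decision of the perturbed CO layer: if
`u ↦ (g u, h u)` is injective, then for every `θ`, for `γ`-almost every perturbation `z`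
(with `γ` the standard Gaussian measure on `ℝⁿ`) there is a unique maximizer of
`u ↦ ⟨θ + z, g(u)⟩ + h(u)` over `U`. -/
theorem stmt_7 {U : Type*} [Fintype U] [Nonempty U] (n : ℕ)
    (g : U → (Fin n → ℝ)) (h : U → ℝ)
    (hinj : Function.Injective fun u : U => (g u, h u))
    (θ : Fin n → ℝ) :
    ∀ᵐ z : Fin n → ℝ ∂(Measure.pi fun _ : Fin n => gaussianReal 0 1),
      ∃! ustar : U, ∀ u : U,
        (∑ i, (θ i + z i) * g u i) + h u ≤ (∑ i, (θ i + z i) * g ustar i) + h ustar := by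
  set γ : Measure (Fin n → ℝ) := Measure.pi fun _ : Fin n => gaussianReal 0 1 with hγ
  have hac : γ ≪ (volume : Measure (Fin n → ℝ)) :=
    pi_ac n _ _ (fun _ => inferInstance) (fun _ => inferInstance)
      (fun _ => gaussianReal_absolutelyContinuous 0 one_ne_zero)
  set val : (Fin n → ℝ) → U → ℝ :=
    fun z u => (∑ i, (θ i + z i) * g u i) + h u with hval
  have expand : ∀ (w : Fin n → ℝ) (k : U),
      ∑ i, (θ i + w i) * g k i = ∑ i, θ i * g k i + ∑ i, w i * g k i := by
    intro w k
    rw [← Finset.sum_add_distrib]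
    exact Finset.sum_congr rfl fun i _ => add_mul _ _ _
  have key : ∀ᵐ z ∂γ, ∀ u v : U, u ≠ v → val z u ≠ val z v := by
    rw [ae_all_iff]
    intro u
    rw [ae_all_iff]
    intro v
    by_cases huv : u = v
    · filter_upwards with z hne; exact absurd huv hne
    · -- show the tie set is null
      rw [ae_iff]
      have hsub : {z : Fin n → ℝ | ¬(u ≠ v → val z u ≠ val z v)}
          ⊆ {z : Fin n → ℝ | val z u = val z v} := by
        intro z hz
        simp only [Set.mem_setOf_eq, Classical.not_imp, not_not] at hz
        exact hz.2
      refine measure_mono_null hsub ?_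
      by_cases hg : g u = g v
      · -- same feature vector, different offsets: no ties at all
        have hh : h u ≠ h v := by
          intro hh
          exact huv (hinj (by simp [hg, hh] : (fun u => (g u, h u)) u = (fun u => (g u, h u)) v))
        have : {z : Fin n → ℝ | val z u = val z v} = ∅ := by
          ext z
          simp only [Set.mem_setOf_eq, Set.mem_empty_iff_false, iff_false]
          intro hzz
          apply hh
          simp only [hval, hg] at hzz
          linarith
        rw [this]; exact measure_empty
      · -- distinct feature vectors: ties lie on a hyperplane
        set a : Fin n → ℝ := fun i => g u i - g v i with haa
        have ha : a ≠ 0 := by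
          intro h0
          apply hg
          funext i
          have := congrFun h0 i
          simp only [haa, Pi.zero_apply] at this
          linarith
        set c : ℝ := (h v - h u) + (∑ i, θ i * g v i - ∑ i, θ i * g u i) with hc
        have hset : {z : Fin n → ℝ | val z u = val z v}
            = {z : Fin n → ℝ | ∑ i, z i * a i = c} := by
          ext z
          simp only [Set.mem_setOf_eq, hval]
          rw [expand z u, expand z v]
          have hsuma : ∑ i, z i * a i = ∑ i, z i * g u i - ∑ i, z i * g v i := by
            rw [← Finset.sum_sub_distrib]
            exact Finset.sum_congr rfl fun i _ => by rw [haa]; ring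
          rw [hsuma, hc]
          constructor <;> intro hzz <;> linarith
        rw [hset]
        exact hac (hyperplane_null a ha c)
  filter_upwards [key] with z hz
  obtain ⟨u0, hu0⟩ := Finite.exists_max (fun u => val z u)
  refine ⟨u0, hu0, ?_⟩
  intro u' hu'
  by_contra hne
  exact hz u' u0 hne (le_antisymm (hu0 u') (hu' u0))
end

section
/- Let U be a nonempty finite type, n a natural number, g : U → ℝⁿ and h : U → ℝ, and let γ denote the standard Gaussian measure on ℝⁿ (the n-fold product of the standard Gaussian measure on ℝ). Define F : ℝⁿ → ℝ by F(θ) = ∫ max_{u ∈ U} (⟨θ + z, g(u)⟩ + h(u)) dγ(z). Then F is differentiable on ℝⁿ. -/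
/-!
The value function `f y = max_u (⟨y, g u⟩ + h u)` is a finite maximum of affine maps, hence
Lipschitz. By Rademacher's theorem it is differentiable off a Lebesgue-null set, which is also
null for the Gaussian measure `γ ≪ Lebesgue`, and this stays true after translating by `θ`.
Since `γ` has a first moment, differentiation under the integral sign, with the Lipschitz
constant as dominating function, gives `∇F(θ) = ∫ ∇f(θ + z) dγ(z)`.
-/

open MeasureTheory ProbabilityTheory
open scoped NNReal

theorem LipschitzWith.finset_sup' {α ι : Type*} [PseudoMetricSpace α] {s : Finset ι}
    (hs : s.Nonempty) {f : ι → α → ℝ} {K : ℝ≥0} (hf : ∀ i ∈ s, LipschitzWith K (f i)) :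
    LipschitzWith K fun x => s.sup' hs (f · x) :=
  LipschitzWith.of_le_add_mul K fun x y => Finset.sup'_le _ _ fun i hi =>
    ((hf i hi).le_add_mul x y).trans <|
      add_le_add_left (Finset.le_sup' (f · y) hi) _

namespace MeasureTheory.Measure.AbsolutelyContinuous

theorem pi_fin {n : ℕ} {α : Fin n → Type*} [∀ i, MeasurableSpace (α i)]
    {μ ν : ∀ i, Measure (α i)} [∀ i, SigmaFinite (μ i)] [∀ i, SigmaFinite (ν i)]
    (h : ∀ i, μ i ≪ ν i) : Measure.pi μ ≪ Measure.pi ν := by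
  induction n with
  | zero => rw [Measure.pi_of_empty, Measure.pi_of_empty]
  | succ n ih =>
    rw [← (measurePreserving_piFinSuccAbove μ 0).symm.map_eq,
      ← (measurePreserving_piFinSuccAbove ν 0).symm.map_eq]
    exact ((h 0).prod (ih fun j => h _)).map (MeasurableEquiv.measurable _)

theorem pi {ι : Type*} [Fintype ι] {α : ι → Type*} [∀ i, MeasurableSpace (α i)]
    {μ ν : ∀ i, Measure (α i)} [∀ i, SigmaFinite (μ i)] [∀ i, SigmaFinite (ν i)]
    (h : ∀ i, μ i ≪ ν i) : Measure.pi μ ≪ Measure.pi ν := by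
  let e := (Fintype.equivFin ι).symm
  rw [← (measurePreserving_piCongrLeft μ e).map_eq, ← (measurePreserving_piCongrLeft ν e).map_eq]
  exact (pi_fin fun i => h _).map (MeasurableEquiv.measurable _)

end MeasureTheory.Measure.AbsolutelyContinuous

theorem MeasureTheory.integrable_id_pi {ι : Type*} [Fintype ι] {E : ι → Type*}
    [∀ i, NormedAddCommGroup (E i)] [∀ i, MeasurableSpace (E i)] {μ : ∀ i, Measure (E i)}
    [∀ i, IsProbabilityMeasure (μ i)] (h : ∀ i, Integrable id (μ i)) :
    Integrable id (Measure.pi μ) :=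
  Integrable.of_eval fun i =>
    Integrable.comp_measurable ((measurePreserving_eval μ i).map_eq ▸ h i) (measurable_pi_apply i)

namespace LipschitzWith

variable {E F : Type*} [NormedAddCommGroup E] [MeasurableSpace E] [NormedAddCommGroup F]
  {f : E → F} {K : ℝ≥0} {μ : Measure E}

theorem integrable_comp_add [OpensMeasurableSpace E] [SecondCountableTopologyEither E F]
    [IsFiniteMeasure μ] (hf : LipschitzWith K f) (hμ : Integrable id μ) (θ : E) : Integrable (fun z => f (θ + z)) μ := by
  refine ((integrable_const ‖f θ‖).add (hμ.norm.const_mul K)).mono'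
    (hf.continuous.comp (continuous_const_add θ)).aestronglyMeasurable (ae_of_all _ fun z => ?_)
  calc ‖f (θ + z)‖ ≤ ‖f θ‖ + ‖f (θ + z) - f θ‖ := norm_le_insert' _ _
    _ ≤ ‖f θ‖ + K * ‖z‖ := by
      gcongr
      simpa using hf.norm_sub_le (θ + z) θ

variable [NormedSpace ℝ E] [FiniteDimensional ℝ E] [BorelSpace E] [NormedSpace ℝ F]
  [FiniteDimensional ℝ F]

theorem ae_differentiableAt_comp_add (hf : LipschitzWith K f) (ν : Measure E)
    [ν.IsAddHaarMeasure] (hμν : μ ≪ ν) (θ : E) : ∀ᵐ z ∂μ, DifferentiableAt ℝ f (θ + z) :=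
  hμν.ae_le ((measurePreserving_add_left ν θ).quasiMeasurePreserving.ae hf.ae_differentiableAt)

theorem hasFDerivAt_integral_comp_add [IsFiniteMeasure μ] (hf : LipschitzWith K f)
    (ν : Measure E) [ν.IsAddHaarMeasure] (hμν : μ ≪ ν) (hμ : Integrable id μ) (θ : E) :
    HasFDerivAt (fun x => ∫ z, f (x + z) ∂μ) (∫ z, fderiv ℝ f (θ + z) ∂μ) θ := by
  refine (hasFDerivAt_integral_of_dominated_loc_of_lip (F := fun x z => f (x + z))
    (bound := fun _ => K) Filter.univ_mem
    (Filter.Eventually.of_forall fun x => (hf.integrable_comp_add hμ x).aestronglyMeasurable)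
    (hf.integrable_comp_add hμ θ)
    ((measurable_fderiv ℝ f).comp (measurable_const_add θ)).aestronglyMeasurable
    (ae_of_all _ fun z => ?_) (integrable_const _) ?_).2
  · simpa [Function.comp_def] using hf.comp (IsometryEquiv.addRight z).isometry.lipschitz
  · filter_upwards [hf.ae_differentiableAt_comp_add ν hμν θ] with z hz
    simpa [Function.comp_def] using hz.hasFDerivAt.comp θ ((hasFDerivAt_id θ).add_const z)

end LipschitzWith

/-- Smoothing effect of the Gaussian perturbation used in the Fenchel-Young loss: the
Gaussian average `F(θ) = ∫ max_{u ∈ U} (⟨θ + z, g(u)⟩ + h(u)) dγ(z)` of the piecewise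
affine value function is differentiable everywhere on `ℝⁿ`, where `γ` is the standard
Gaussian measure on `ℝⁿ`. -/
theorem stmt_11 {U : Type*} [Fintype U] [Nonempty U] (n : ℕ)
    (g : U → (Fin n → ℝ)) (h : U → ℝ)
    (F : (Fin n → ℝ) → ℝ)
    (hF : ∀ θ : Fin n → ℝ,
      F θ = ∫ z : Fin n → ℝ,
        (Finset.univ.sup' Finset.univ_nonempty
          fun u : U => (∑ i, (θ i + z i) * g u i) + h u)
        ∂(Measure.pi fun _ : Fin n => gaussianReal 0 1)) :
    Differentiable ℝ F := by
  let ℓ : U → (Fin n → ℝ) →L[ℝ] ℝ := fun u => ∑ i, g u i • ContinuousLinearMap.proj i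
  have hF' : F = fun θ => ∫ z, Finset.univ.sup' Finset.univ_nonempty
      (fun u => ℓ u (θ + z) + h u) ∂(Measure.pi fun _ : Fin n => gaussianReal 0 1) := by
    funext θ
    simp [hF, ℓ, mul_comm]
  have hlip : LipschitzWith (Finset.univ.sup fun u => ‖ℓ u‖₊)
      fun y => Finset.univ.sup' Finset.univ_nonempty fun u => ℓ u y + h u :=
    LipschitzWith.finset_sup' _ fun u _ =>
      ((ℓ u).lipschitz.add (LipschitzWith.const (h u))).weaken
        (by simpa using Finset.le_sup (f := fun u => ‖ℓ u‖₊) (Finset.mem_univ u))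
  have hac : (Measure.pi fun _ : Fin n => gaussianReal 0 1) ≪ volume :=
    volume_pi (α := fun _ : Fin n => ℝ) ▸
      Measure.AbsolutelyContinuous.pi fun _ => gaussianReal_absolutelyContinuous 0 one_ne_zero
  rw [hF']
  exact fun θ => (hlip.hasFDerivAt_integral_comp_add volume hac
    (integrable_id_pi fun _ => IsGaussian.integrable_id) θ).differentiableAt
end
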